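/- Let S and T be disjoint sets of vertices, and let T' ⊆ T. If f is a maximum flow from S to T' with respect to the capacity function c, and f' is a maximum flow from S to T ∖ T' with respect to the residual capacity r_f, then f + f' is a maximum flow from S to T with respect to c. -/
import Mathlib


open scoped Classical

/-- A pseudoflow with respect to capacity `c`: capacity and antisymmetry constraints. -/
def IsPseudoflow {V : Type*} (c f : V → V → ℝ) : Prop :=
  (∀ u v, f u v ≤ c u v) ∧ (∀ u v, f u v = - f v u)

/-- The flow excess of a vertex `v` under `f`. -/
noncomputable def exc {V : Type*} [Fintype V] (f : V → V → ℝ) (v : V) : ℝ :=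
  ∑ u, f u v

/-- A flow from `S` to `T` with respect to `c`. -/
def IsFlow {V : Type*} [Fintype V] (c : V → V → ℝ) (S T : Set V)
    (f : V → V → ℝ) : Prop :=
  IsPseudoflow c f ∧ ∀ v, v ∉ S ∪ T → exc f v = 0

/-- The value of a flow with sink set `T`. -/
noncomputable def flowValue {V : Type*} [Fintype V] (f : V → V → ℝ) (T : Set V) : ℝ :=
  ∑ t ∈ T.toFinset, exc f t

/-- A maximum flow from `S` to `T` with respect to `c`. -/
def IsMaxFlow {V : Type*} [Fintype V] (c : V → V → ℝ) (S T : Set V)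
    (f : V → V → ℝ) : Prop :=
  IsFlow c S T f ∧ ∀ g, IsFlow c S T g → flowValue g T ≤ flowValue f T

/-- The residualCap capacity with respect to pseudoflow `f` and capacity `c`. -/
def residualCap {V : Type*} (c f : V → V → ℝ) : V → V → ℝ :=
  fun u v => c u v - f u v

/-- A residualCap path (w.r.t. capacity `c` and pseudoflow `f`) from a vertex of `A`
to a vertex of `B`; a single vertex in `A ∩ B` counts as such a path. -/
def ResidualPath {V : Type*} (c f : V → V → ℝ) (A B : Set V) : Prop :=
  ∃ (k : ℕ) (p : Fin (k + 1) → V), p 0 ∈ A ∧ p (Fin.last k) ∈ B ∧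
    ∀ i : Fin k, 0 < residualCap c f (p i.castSucc) (p i.succ)

/-! ### Auxiliary machinery -/

section Reach
variable {V : Type*}

/-- Vertices reachable from `S` along edges with positive residual `r`. -/
def Reach (r : V → V → ℝ) (S : Set V) : Set V :=
  {v | ∃ s ∈ S, Relation.ReflTransGen (fun a b => 0 < r a b) s v}

lemma Reach.base (r : V → V → ℝ) (S : Set V) : S ⊆ Reach r S :=
  fun s hs => ⟨s, hs, Relation.ReflTransGen.refl⟩

lemma Reach.tail {r : V → V → ℝ} {S : Set V} {u v : V} (hu : u ∈ Reach r S)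
    (h : 0 < r u v) : v ∈ Reach r S := by
  obtain ⟨s, hs, hc⟩ := hu
  exact ⟨s, hs, hc.tail h⟩

lemma Reach.not_step {r : V → V → ℝ} {S : Set V} {u v : V} (hu : u ∈ Reach r S)
    (hv : v ∉ Reach r S) : r u v ≤ 0 := by
  by_contra h
  push_neg at h
  exact hv (Reach.tail hu h)

end Reach

section Sums
variable {V : Type*} [Fintype V]

lemma exc_add (f g : V → V → ℝ) (v : V) :
    exc (fun u v => f u v + g u v) v = exc f v + exc g v := by
  simp [exc, Finset.sum_add_distrib]

lemma exc_smul (a : ℝ) (f : V → V → ℝ) (v : V) :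
    exc (fun u v => a * f u v) v = a * exc f v := by
  simp [exc, Finset.mul_sum]

lemma sum_antisym (φ : V → V → ℝ) (hφ : ∀ u v, φ u v = - φ v u) (s : Finset V) :
    ∑ u ∈ s, ∑ v ∈ s, φ u v = 0 := by
  have h1 : ∑ u ∈ s, ∑ v ∈ s, φ u v = ∑ u ∈ s, ∑ v ∈ s, -(φ v u) := by
    refine Finset.sum_congr rfl fun u _ => Finset.sum_congr rfl fun v _ => hφ u v
  have h2 : ∑ u ∈ s, ∑ v ∈ s, -(φ v u) = -∑ u ∈ s, ∑ v ∈ s, φ v u := by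
    simp
  have h3 : ∑ u ∈ s, ∑ v ∈ s, φ v u = ∑ v ∈ s, ∑ u ∈ s, φ u v := by
    rw [Finset.sum_comm]
  have h4 : (∑ v ∈ s, ∑ u ∈ s, φ u v) = ∑ u ∈ s, ∑ v ∈ s, φ u v := by
    rw [Finset.sum_comm]
  linarith [h1, h2, h3, h4]

lemma sum_exc_eq_cut (φ : V → V → ℝ) (hφ : ∀ u v, φ u v = - φ v u) (R : Finset V) :
    ∑ v ∈ Rᶜ, exc φ v = ∑ u ∈ R, ∑ v ∈ Rᶜ, φ u v := by
  have hsplit : ∀ v, exc φ v = ∑ u ∈ R, φ u v + ∑ u ∈ Rᶜ, φ u v := by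
    intro v
    rw [exc, ← Finset.sum_add_sum_compl R (fun u => φ u v)]
  calc ∑ v ∈ Rᶜ, exc φ v
      = ∑ v ∈ Rᶜ, ∑ u ∈ R, φ u v + ∑ v ∈ Rᶜ, ∑ u ∈ Rᶜ, φ u v := by
        simp_rw [hsplit]
        rw [Finset.sum_add_distrib]
    _ = ∑ u ∈ R, ∑ v ∈ Rᶜ, φ u v + 0 := by
        congr 1
        · exact Finset.sum_comm
        · exact sum_antisym (fun a b => φ b a) (fun u v => hφ v u) Rᶜ
    _ = ∑ u ∈ R, ∑ v ∈ Rᶜ, φ u v := add_zero _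

lemma sum_exc_univ (φ : V → V → ℝ) (hφ : ∀ u v, φ u v = - φ v u) :
    ∑ v, exc φ v = 0 := by
  calc ∑ v, exc φ v = ∑ v, ∑ u, φ u v := rfl
    _ = ∑ u, ∑ v, φ u v := Finset.sum_comm
    _ = 0 := sum_antisym φ hφ Finset.univ

lemma sumif (A : Set V) [Fintype ↥A] (x : V) (a : ℝ) :
    ∑ v ∈ A.toFinset, (if v = x then a else 0) = if x ∈ A then a else 0 := by
  rw [Finset.sum_ite_eq' A.toFinset x (fun _ => a)]
  simp

end Sums

section Aug
variable {V : Type*} [Fintype V]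

lemma exists_aug {r : V → V → ℝ} (hr : ∀ u v, 0 ≤ r u v) {a b : V}
    (hab : Relation.ReflTransGen (fun x y => 0 < r x y) a b) :
    ∃ (h : V → V → ℝ) (δ : ℝ), 0 < δ ∧ (∀ u v, h u v ≤ r u v) ∧
      (∀ u v, h u v = - h v u) ∧
      (∀ v, exc h v = (if v = b then δ else 0) - (if v = a then δ else 0)) := by
  induction hab with
  | refl =>
      refine ⟨fun _ _ => 0, 1, one_pos, fun u v => hr u v, fun u v => by ring, fun v => ?_⟩
      simp [exc]
  | @tail p q hap hpq ih =>
      obtain ⟨h, δ, hδ, hcap, hanti, hexc⟩ := ih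
      have hρ : 0 < r p q := hpq
      set ρ : ℝ := r p q with hρdef
      have hδρ : 0 < δ + ρ := by linarith
      set t : ℝ := ρ / (δ + ρ) with ht
      have ht0 : 0 < t := div_pos hρ hδρ
      have ht1 : t ≤ 1 := by
        rw [ht, div_le_one hδρ]; linarith
      set ε : ℝ := t * δ with hε
      have hε0 : 0 < ε := mul_pos ht0 hδ
      have hkey : ε = (1 - t) * ρ := by
        rw [hε, ht]
        field_simp
        ring
      set h' : V → V → ℝ := fun u v =>
        t * h u v + ((if u = p ∧ v = q then ε else 0) - (if u = q ∧ v = p then ε else 0))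
        with hh'
      have hcap' : ∀ u v, h' u v ≤ r u v := by
        intro u v
        have h1 : t * h u v ≤ t * r u v := mul_le_mul_of_nonneg_left (hcap u v) ht0.le
        have h2 : t * r u v ≤ r u v := by nlinarith [hr u v]
        by_cases hc1 : u = p ∧ v = q
        · by_cases hc2 : u = q ∧ v = p
          · have hpq' : p = q := hc1.1.symm.trans hc2.1
            have hval : h' u v = t * h u v := by
              simp [hh', hc1.1, hc1.2, hpq']
            rw [hval]
            linarith
          · obtain ⟨rfl, rfl⟩ := hc1
            have hval : h' u v = t * h u v + ε := by
              simp [hh', hc2]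
            rw [hval]
            have hrv : r u v = ρ := hρdef.symm
            linarith
        · by_cases hc2 : u = q ∧ v = p
          · simp only [hh', if_neg hc1, if_pos hc2]
            linarith
          · simp only [hh', if_neg hc1, if_neg hc2]
            linarith
      have hanti' : ∀ u v, h' u v = - h' v u := by
        intro u v
        have e1 : (if v = p ∧ u = q then ε else 0) = (if u = q ∧ v = p then ε else 0) :=
          if_congr and_comm rfl rfl
        have e2 : (if v = q ∧ u = p then ε else 0) = (if u = p ∧ v = q then ε else 0) :=
          if_congr and_comm rfl rfl
        simp only [hh']
        rw [hanti v u, e1, e2]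
        ring
      have hexc' : ∀ v, exc h' v =
          (if v = q then ε else 0) - (if v = a then ε else 0) := by
        intro v
        have sum1 : ∀ x y : V, ∑ u, (if u = x ∧ v = y then ε else 0)
            = if v = y then ε else 0 := by
          intro x y
          by_cases hv : v = y
          · simp [hv]
          · simp [hv]
        have : exc h' v = t * exc h v
            + ((if v = q then ε else 0) - (if v = p then ε else 0)) := by
          simp only [exc, hh']
          rw [Finset.sum_add_distrib, Finset.sum_sub_distrib, ← Finset.mul_sum,
            sum1 p q, sum1 q p]
        rw [this, hexc v, hε]
        split_ifs <;> ring
      exact ⟨h', ε, hε0, hcap', hanti', hexc'⟩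

end Aug

section Cut
variable {V : Type*} [Fintype V]

lemma flowValue_le_of_cut (κ φ g : V → V → ℝ) (S T : Set V)
    (hφ : IsFlow κ S T φ) (hg : IsFlow κ S T g)
    (R : Set V) (hSR : S ⊆ R) (hTR : ∀ t ∈ T, t ∉ R)
    (hsat : ∀ u ∈ R, ∀ v, v ∉ R → κ u v ≤ φ u v) :
    flowValue g T ≤ flowValue φ T := by
  classical
  have key : ∀ ψ : V → V → ℝ, IsFlow κ S T ψ →
      flowValue ψ T = ∑ u ∈ R.toFinset, ∑ v ∈ (R.toFinset)ᶜ, ψ u v := by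
    intro ψ hψ
    rw [← sum_exc_eq_cut ψ hψ.1.2 R.toFinset, flowValue]
    apply Finset.sum_subset
    · intro t ht
      rw [Set.mem_toFinset] at ht
      rw [Finset.mem_compl, Set.mem_toFinset]
      exact hTR t ht
    · intro v hv hvT
      apply hψ.2
      intro hmem
      rcases hmem with hS | hT
      · rw [Finset.mem_compl, Set.mem_toFinset] at hv
        exact hv (hSR hS)
      · exact hvT (Set.mem_toFinset.mpr hT)
  rw [key g hg, key φ hφ]
  refine Finset.sum_le_sum fun u hu => Finset.sum_le_sum fun v hv => ?_
  rw [Set.mem_toFinset] at hu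
  rw [Finset.mem_compl, Set.mem_toFinset] at hv
  exact le_trans (hg.1.1 u v) (hsat u hu v hv)

lemma exists_isMaxFlow (κ : V → V → ℝ) (hκ : ∀ u v, 0 ≤ κ u v)
    (S T : Set V) : ∃ z, IsMaxFlow κ S T z := by
  classical
  set K : Set (V → V → ℝ) := {z | IsFlow κ S T z} with hK
  have hzero : (fun _ _ => (0:ℝ)) ∈ K := by
    refine ⟨⟨fun u v => hκ u v, fun u v => by ring⟩, fun v _ => by simp [exc]⟩
  have hcont : ∀ u v : V, Continuous fun z : V → V → ℝ => z u v :=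
    fun u v => (continuous_apply v).comp (continuous_apply u)
  have hclosed : IsClosed K := by
    have hKeq : K = (⋂ (u : V), ⋂ (v : V), {z : V → V → ℝ | z u v ≤ κ u v}) ∩
        ((⋂ (u : V), ⋂ (v : V), {z : V → V → ℝ | z u v = - z v u}) ∩
         (⋂ (v : V), ⋂ (_ : v ∉ S ∪ T), {z : V → V → ℝ | exc z v = 0})) := by
      ext z
      simp only [hK, Set.mem_setOf_eq, Set.mem_inter_iff, Set.mem_iInter,
        IsFlow, IsPseudoflow]
      tauto
    rw [hKeq]
    refine IsClosed.inter ?_ (IsClosed.inter ?_ ?_)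
    · exact isClosed_iInter fun u => isClosed_iInter fun v =>
        isClosed_le (hcont u v) continuous_const
    · exact isClosed_iInter fun u => isClosed_iInter fun v =>
        isClosed_eq (hcont u v) (hcont v u).neg
    · refine isClosed_iInter fun v => isClosed_iInter fun _ => ?_
      have : Continuous fun z : V → V → ℝ => exc z v := by
        unfold exc
        exact continuous_finset_sum _ fun u _ => hcont u v
      exact isClosed_eq this continuous_const
  have hbdd : K ⊆ Set.pi Set.univ fun u => Set.pi Set.univ fun v =>
      Set.Icc (-(κ v u)) (κ u v) := by
    intro z hz
    intro u _
    intro v _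
    have h1 : z u v ≤ κ u v := hz.1.1 u v
    have h2 : z v u ≤ κ v u := hz.1.1 v u
    have h3 : z u v = - z v u := hz.1.2 u v
    exact ⟨by linarith, h1⟩
  have hcomp : IsCompact K := IsCompact.of_isClosed_subset
    (isCompact_univ_pi fun u => isCompact_univ_pi fun v => isCompact_Icc) hclosed hbdd
  have hcontval : ContinuousOn (fun z : V → V → ℝ => flowValue z T) K := by
    apply Continuous.continuousOn
    unfold flowValue exc
    exact continuous_finset_sum _ fun t _ => continuous_finset_sum _ fun u _ => hcont u t
  obtain ⟨z, hzK, hmax⟩ := hcomp.exists_isMaxOn ⟨_, hzero⟩ hcontval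
  exact ⟨z, hzK, fun g hg => hmax hg⟩

end Cut

lemma flowValue_eq_sum {V : Type*} [Fintype V] (y : V → V → ℝ) (A : Set V) [Fintype ↥A] :
    flowValue y A = ∑ v ∈ A.toFinset, exc y v := by
  rw [flowValue]
  refine Finset.sum_congr ?_ fun x _ => rfl
  ext x
  simp [Set.mem_toFinset]

theorem maxFlow_add_sinks {V : Type*} [Fintype V] (c f f' : V → V → ℝ)
    (S T T' : Set V)
    (hc : ∀ u v, 0 ≤ c u v)
    (hST : Disjoint S T)
    (hT' : T' ⊆ T)
    (hf : IsMaxFlow c S T' f)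
    (hf' : IsMaxFlow (residualCap c f) S (T \ T') f') :
    IsMaxFlow c S T (fun u v => f u v + f' u v) := by
  classical
  obtain ⟨⟨⟨hfc, hfa⟩, hfe⟩, hfmax⟩ := hf
  obtain ⟨⟨⟨hf'c, hf'a⟩, hf'e⟩, hf'max⟩ := hf'
  have hf'c' : ∀ u v, f' u v ≤ c u v - f u v := fun u v => hf'c u v
  set F : V → V → ℝ := fun u v => f u v + f' u v with hF
  have hrf0 : ∀ u v, 0 ≤ residualCap c f u v := fun u v => sub_nonneg.mpr (hfc u v)
  have hFc : ∀ u v, F u v ≤ c u v := by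
    intro u v
    have := hf'c' u v
    simp only [hF]
    linarith
  have hFa : ∀ u v, F u v = - F v u := by
    intro u v
    simp only [hF]
    rw [hfa u v, hf'a u v]
    ring
  have hrF0 : ∀ u v, 0 ≤ c u v - F u v := fun u v => sub_nonneg.mpr (hFc u v)
  have hFflow : IsFlow c S T F := by
    refine ⟨⟨hFc, hFa⟩, ?_⟩
    intro v hv
    have h1 : exc f v = 0 := by
      apply hfe
      intro hmem
      rcases hmem with hS | hT1
      · exact hv (Or.inl hS)
      · exact hv (Or.inr (hT' hT1))
    have h2 : exc f' v = 0 := by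
      apply hf'e
      intro hmem
      rcases hmem with hS | hT1
      · exact hv (Or.inl hS)
      · exact hv (Or.inr hT1.1)
    rw [hF, exc_add f f' v, h1, h2, add_zero]
  refine ⟨hFflow, ?_⟩
  intro g hg
  set rF : V → V → ℝ := fun u v => c u v - F u v with hrF
  set R : Set V := Reach rF S with hR
  have hTR : ∀ t ∈ T, t ∉ R := by
    intro t ht hreach
    obtain ⟨s, hsS, hchain⟩ := hreach
    obtain ⟨h, δ, hδ, hhcap, hha, hhe⟩ := exists_aug (r := rF) hrF0 hchain
    have hsT : s ∉ T := Set.disjoint_left.mp hST hsS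
    have hst : s ≠ t := fun e => hsT (e ▸ ht)
    set w : V → V → ℝ := fun u v => f' u v + h u v with hw
    have hwcap : ∀ u v, w u v ≤ residualCap c f u v := by
      intro u v
      have h1 : h u v ≤ rF u v := hhcap u v
      have h2 : rF u v = c u v - (f u v + f' u v) := rfl
      have h3 : f' u v + h u v ≤ c u v - f u v := by rw [h2] at h1; linarith
      exact h3
    have hwa : ∀ u v, w u v = - w v u := by
      intro u v
      simp only [hw]
      rw [hf'a u v, hha u v]
      ring
    have hwe : ∀ v, exc w v = exc f' v
        + ((if v = t then δ else 0) - (if v = s then δ else 0)) := by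
      intro v
      rw [hw, exc_add f' h v, hhe v]
    by_cases htT' : t ∈ T'
    · -- t ∈ T' : the hard case
      set chat : V → V → ℝ := fun u v => max (w u v) 0 with hchat
      have hchat0 : ∀ u v, 0 ≤ chat u v := fun u v => le_max_right _ _
      have hchatrf : ∀ u v, chat u v ≤ residualCap c f u v :=
        fun u v => max_le (hwcap u v) (hrf0 u v)
      have htS : t ∉ S := Set.disjoint_right.mp hST ht
      have htd : t ∉ T \ T' := fun hh => hh.2 htT'
      have hexcf't : exc f' t = 0 := by
        apply hf'e
        intro hmem
        rcases hmem with h1 | h2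
        · exact htS h1
        · exact htd h2
      by_cases hreach0 : t ∈ Reach chat S
      · -- a positive flow to t' with respect to chat contradicts maximality of f
        obtain ⟨s₀, hs₀, hchain₀⟩ := hreach0
        obtain ⟨k, δ₀, hδ₀, hkcap, hka, hke⟩ := exists_aug hchat0 hchain₀
        have hs₀T : s₀ ∉ T := Set.disjoint_left.mp hST hs₀
        have hφflow : IsFlow c S T' (fun u v => f u v + k u v) := by
          refine ⟨⟨?_, ?_⟩, ?_⟩
          · intro u v
            show f u v + k u v ≤ c u v
            have h1 : k u v ≤ c u v - f u v := le_trans (hkcap u v) (hchatrf u v)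
            linarith
          · intro u v
            show f u v + k u v = -(f v u + k v u)
            rw [hfa u v, hka u v]
            ring
          · intro v hv
            have hvf : exc f v = 0 := hfe v hv
            rw [exc_add f k v, hvf, hke v]
            have hvt : v ≠ t := fun e => hv (Or.inr (e ▸ htT'))
            have hvs : v ≠ s₀ := fun e => hv (Or.inl (e ▸ hs₀))
            simp [hvt, hvs]
        have hval : flowValue (fun u v => f u v + k u v) T' = flowValue f T' + δ₀ := by
          rw [flowValue_eq_sum _ T', flowValue_eq_sum f T']
          simp_rw [exc_add f k, hke]
          rw [Finset.sum_add_distrib, Finset.sum_sub_distrib, sumif, sumif,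
            if_pos htT', if_neg (fun hh : s₀ ∈ T' => hs₀T (hT' hh))]
          ring
        have := hfmax _ hφflow
        rw [hval] at this
        linarith
      · -- no flow from S to t along positive edges of w: return the excess at t
        set d : V → V → ℝ := fun u v => max (w v u) 0 with hd
        have hd0 : ∀ u v, 0 ≤ d u v := fun u v => le_max_right _ _
        obtain ⟨z, hzflow, hzmax⟩ := exists_isMaxFlow d hd0 {t} (T \ T')
        obtain ⟨⟨hzc, hza⟩, hze⟩ := hzflow
        set π : ℝ := flowValue z (T \ T') with hπ
        set dz : V → V → ℝ := fun u v => d u v - z u v with hdz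
        have hdz0 : ∀ u v, 0 ≤ dz u v := fun u v => sub_nonneg.mpr (hzc u v)
        set Q : Set V := Reach dz {t} with hQ
        have htQ : t ∈ Q := Reach.base dz {t} rfl
        have hQT : ∀ b, b ∈ T \ T' → b ∉ Q := by
          intro b hb hbQ
          obtain ⟨s₁, hs₁, hchain₁⟩ := hbQ
          have hs₁t : s₁ = t := hs₁
          subst hs₁t
          obtain ⟨h₂, δ₂, hδ₂, h₂cap, h₂a, h₂e⟩ := exists_aug hdz0 hchain₁
          have hz'flow : IsFlow d {s₁} (T \ T') (fun u v => z u v + h₂ u v) := by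
            refine ⟨⟨?_, ?_⟩, ?_⟩
            · intro u v
              show z u v + h₂ u v ≤ d u v
              have := h₂cap u v
              simp only [hdz] at this
              linarith
            · intro u v
              show z u v + h₂ u v = -(z v u + h₂ v u)
              rw [hza u v, h₂a u v]
              ring
            · intro v hv
              have hvz : exc z v = 0 := hze v hv
              rw [exc_add z h₂ v, hvz, h₂e v]
              have hvb : v ≠ b := fun e => hv (Or.inr (e ▸ hb))
              have hvt : v ≠ s₁ := fun e => hv (Or.inl e)
              simp [hvb, hvt]
          have hval2 : flowValue (fun u v => z u v + h₂ u v) (T \ T') = π + δ₂ := by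
            rw [hπ, flowValue_eq_sum _ (T \ T'), flowValue_eq_sum z (T \ T')]
            simp_rw [exc_add z h₂, h₂e]
            rw [Finset.sum_add_distrib, Finset.sum_sub_distrib, sumif, sumif,
              if_pos hb, if_neg htd]
            ring
          have := hzmax _ hz'flow
          rw [hval2] at this
          linarith
        have hzt : exc z t = -π := by
          have h0 : ∑ v, exc z v = 0 := sum_exc_univ z hza
          have hsp : ∑ v ∈ (T \ T').toFinset, exc z v
              + ∑ v ∈ ((T \ T').toFinset)ᶜ, exc z v = ∑ v, exc z v :=
            Finset.sum_add_sum_compl _ _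
          have hrest : ∑ v ∈ ((T \ T').toFinset)ᶜ, exc z v = exc z t := by
            apply Finset.sum_eq_single_of_mem
            · rw [Finset.mem_compl, Set.mem_toFinset]
              exact htd
            · intro v hv hvt
              apply hze
              intro hmem
              rcases hmem with h1 | h2
              · exact hvt h1
              · rw [Finset.mem_compl, Set.mem_toFinset] at hv
                exact hv h2
          have hfirst : ∑ v ∈ (T \ T').toFinset, exc z v = π := by
            rw [hπ, flowValue_eq_sum z (T \ T')]
          linarith
        set R₀ : Set V := Reach chat S with hR₀
        have hSR₀ : S ⊆ R₀ := Reach.base _ _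
        set Xf : Finset V := Q.toFinset \ R₀.toFinset with hXf
        have htX : t ∈ Xf := by
          rw [hXf, Finset.mem_sdiff, Set.mem_toFinset, Set.mem_toFinset]
          exact ⟨htQ, hreach0⟩
        have hXexc : ∑ v ∈ Xf, exc w v = δ := by
          rw [Finset.sum_eq_single_of_mem t htX ?_]
          · rw [hwe t, hexcf't]
            simp [Ne.symm hst]
          · intro v hv hvt
            rw [hXf, Finset.mem_sdiff, Set.mem_toFinset, Set.mem_toFinset] at hv
            have hvQ : v ∈ Q := hv.1
            have hvR₀ : v ∉ R₀ := hv.2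
            have hvS : v ∉ S := fun hh => hvR₀ (hSR₀ hh)
            have hvs : v ≠ s := fun e => hvS (e ▸ hsS)
            have hvTT' : v ∉ T \ T' := fun hh => hQT v hh hvQ
            have hvf' : exc f' v = 0 := by
              apply hf'e
              intro hmem
              rcases hmem with h1 | h2
              · exact hvS h1
              · exact hvTT' h2
            rw [hwe v, hvf']
            simp [hvt, hvs]
        have hcut : ∑ v ∈ Xf, exc w v = ∑ u ∈ Xfᶜ, ∑ v ∈ Xf, w u v := by
          have hcc := sum_exc_eq_cut w hwa (Xfᶜ)
          rw [compl_compl] at hcc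
          exact hcc
        have hQnn : ∀ a ∈ Q.toFinset, ∀ bb ∈ (Q.toFinset)ᶜ, 0 ≤ z a bb := by
          intro a ha bb hbb
          rw [Set.mem_toFinset] at ha
          rw [Finset.mem_compl, Set.mem_toFinset] at hbb
          have h1 := Reach.not_step (r := dz) ha hbb
          have h2 : 0 ≤ d a bb := hd0 a bb
          simp only [hdz] at h1
          linarith
        have hπcut : π = ∑ a ∈ Q.toFinset, ∑ bb ∈ (Q.toFinset)ᶜ, z a bb := by
          have hcc := sum_exc_eq_cut z hza Q.toFinset
          have hLHS : ∑ v ∈ (Q.toFinset)ᶜ, exc z v = π := by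
            rw [hπ, flowValue_eq_sum z (T \ T')]
            symm
            apply Finset.sum_subset
            · intro x hx
              rw [Set.mem_toFinset] at hx
              rw [Finset.mem_compl, Set.mem_toFinset]
              exact hQT x hx
            · intro x hx hxT
              apply hze
              intro hmem
              rcases hmem with h1 | h2
              · rw [Finset.mem_compl, Set.mem_toFinset] at hx
                have : x ∈ Q := by
                  have hxt : x = t := h1
                  rw [hxt]
                  exact htQ
                exact hx this
              · exact hxT (Set.mem_toFinset.mpr h2)
          rw [← hLHS, hcc]
        have hterm : ∀ u ∈ Xfᶜ, ∀ v ∈ Xf, w u v ≤ (if u ∈ R₀.toFinset then 0 else z v u) := by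
          intro u hu v hv
          rw [Finset.mem_compl] at hu
          rw [hXf, Finset.mem_sdiff, Set.mem_toFinset, Set.mem_toFinset] at hv
          have hvQ : v ∈ Q := hv.1
          have hvR₀ : v ∉ R₀ := hv.2
          by_cases huR : u ∈ R₀.toFinset
          · rw [if_pos huR]
            rw [Set.mem_toFinset] at huR
            have h1 := Reach.not_step (r := chat) huR hvR₀
            have h2 : w u v ≤ chat u v := le_max_left _ _
            linarith
          · rw [if_neg huR]
            have huQ : u ∉ Q := by
              intro hh
              apply hu
              rw [hXf, Finset.mem_sdiff, Set.mem_toFinset]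
              exact ⟨hh, huR⟩
            have h1 := Reach.not_step (r := dz) hvQ huQ
            have h2 : w u v ≤ d v u := le_max_left _ _
            simp only [hdz] at h1
            linarith
        have hbound : ∑ u ∈ Xfᶜ, ∑ v ∈ Xf, w u v ≤ π := by
          have hXQ : Xf ⊆ Q.toFinset := by
            intro x hx
            rw [hXf, Finset.mem_sdiff] at hx
            exact hx.1
          have step1 : ∑ u ∈ Xfᶜ, ∑ v ∈ Xf, w u v
              ≤ ∑ u ∈ Xfᶜ, (if u ∈ Q.toFinset then 0 else ∑ v ∈ Q.toFinset, z v u) := by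
            refine Finset.sum_le_sum fun u hu => ?_
            have huu := hterm u hu
            by_cases huR : u ∈ R₀.toFinset
            · have h1 : ∑ v ∈ Xf, w u v ≤ 0 := by
                have : ∑ v ∈ Xf, w u v ≤ ∑ v ∈ Xf, (0:ℝ) := by
                  refine Finset.sum_le_sum fun v hv => ?_
                  have := huu v hv
                  rw [if_pos huR] at this
                  exact this
                simpa using this
              by_cases huQ : u ∈ Q.toFinset
              · rw [if_pos huQ]
                exact h1
              · rw [if_neg huQ]
                refine le_trans h1 (Finset.sum_nonneg fun v hv => ?_)
                exact hQnn v hv u (Finset.mem_compl.mpr huQ)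
            · have huQ : u ∉ Q.toFinset := by
                intro hh
                rw [Finset.mem_compl] at hu
                exact hu (by rw [hXf, Finset.mem_sdiff]; exact ⟨hh, huR⟩)
              rw [if_neg huQ]
              have h1 : ∑ v ∈ Xf, w u v ≤ ∑ v ∈ Xf, z v u := by
                refine Finset.sum_le_sum fun v hv => ?_
                have := huu v hv
                rw [if_neg huR] at this
                exact this
              refine le_trans h1 ?_
              refine Finset.sum_le_sum_of_subset_of_nonneg hXQ fun v hv _ => ?_
              exact hQnn v hv u (Finset.mem_compl.mpr huQ)
          have step2 : ∑ u ∈ Xfᶜ, (if u ∈ Q.toFinset then 0 else ∑ v ∈ Q.toFinset, z v u)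
              ≤ ∑ u, (if u ∈ Q.toFinset then 0 else ∑ v ∈ Q.toFinset, z v u) := by
            refine Finset.sum_le_sum_of_subset_of_nonneg (Finset.subset_univ _)
              fun u _ _ => ?_
            by_cases huQ : u ∈ Q.toFinset
            · simp [huQ]
            · rw [if_neg huQ]
              exact Finset.sum_nonneg fun v hv => hQnn v hv u (Finset.mem_compl.mpr huQ)
          have step3 : ∑ u, (if u ∈ Q.toFinset then 0 else ∑ v ∈ Q.toFinset, z v u)
              = ∑ u ∈ (Q.toFinset)ᶜ, ∑ v ∈ Q.toFinset, z v u := by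
            rw [← Finset.sum_add_sum_compl Q.toFinset]
            have e1 : ∑ u ∈ Q.toFinset, (if u ∈ Q.toFinset then (0:ℝ) else ∑ v ∈ Q.toFinset, z v u) = 0 := by
              apply Finset.sum_eq_zero
              intro u hu
              rw [if_pos hu]
            have e2 : ∑ u ∈ (Q.toFinset)ᶜ, (if u ∈ Q.toFinset then (0:ℝ) else ∑ v ∈ Q.toFinset, z v u)
                = ∑ u ∈ (Q.toFinset)ᶜ, ∑ v ∈ Q.toFinset, z v u := by
              apply Finset.sum_congr rfl
              intro u hu
              rw [Finset.mem_compl] at hu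
              rw [if_neg hu]
            rw [e1, e2, zero_add]
          have step4 : ∑ u ∈ (Q.toFinset)ᶜ, ∑ v ∈ Q.toFinset, z v u = π := by
            rw [hπcut]
            exact Finset.sum_comm
          linarith
        have hδπ : δ ≤ π := by
          rw [← hXexc, hcut]
          exact hbound
        have hπpos : 0 < π := lt_of_lt_of_le hδ hδπ
        set α : ℝ := δ / π with hα
        have hα0 : 0 < α := div_pos hδ hπpos
        have hα1 : α ≤ 1 := by
          rw [hα, div_le_one hπpos]
          exact hδπ
        have hf''cap : ∀ u v, w u v + α * z u v ≤ residualCap c f u v := by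
          intro u v
          by_cases hz1 : z u v ≤ 0
          · have h1 : α * z u v ≤ 0 := mul_nonpos_iff.mpr (Or.inl ⟨hα0.le, hz1⟩)
            linarith [hwcap u v]
          · push_neg at hz1
            have h1 : z u v ≤ d u v := hzc u v
            by_cases hwvu : w v u ≤ 0
            · exfalso
              have hduv : d u v = 0 := max_eq_right hwvu
              linarith
            · push_neg at hwvu
              have hduv : d u v = w v u := max_eq_left hwvu.le
              have h3 : w u v = - w v u := hwa u v
              have h4 : α * z u v ≤ z u v := by nlinarith
              have h5 := hrf0 u v
              have : w u v + α * z u v ≤ 0 := by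
                rw [h3]
                linarith
              linarith
        have hf''a : ∀ u v, (w u v + α * z u v) = - (w v u + α * z v u) := by
          intro u v
          rw [hwa u v, hza u v]
          ring
        have hf''exc : ∀ v, exc (fun u v => w u v + α * z u v) v
            = exc w v + α * exc z v := by
          intro v
          rw [exc_add w (fun u v => α * z u v) v, exc_smul]
        have hαπ : α * π = δ := by
          rw [hα]
          field_simp
        have hf''flow : IsFlow (residualCap c f) S (T \ T')
            (fun u v => w u v + α * z u v) := by
          refine ⟨⟨hf''cap, hf''a⟩, ?_⟩
          intro v hv
          rw [hf''exc v]
          by_cases hvt : v = t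
          · subst hvt
            rw [hwe v, hexcf't, hzt]
            have hewv : (0:ℝ) + ((if v = v then δ else 0) - (if v = s then δ else 0)) = δ := by
              simp [Ne.symm hst]
            rw [hewv]
            linarith [hαπ]
          · have hvs : v ≠ s := fun e => hv (Or.inl (e ▸ hsS))
            have hwv : exc w v = 0 := by
              rw [hwe v, hf'e v hv]
              simp [hvt, hvs]
            have hzv : exc z v = 0 := by
              apply hze
              intro hmem
              rcases hmem with h1 | h2
              · exact hvt h1
              · exact hv (Or.inr h2)
            rw [hwv, hzv]
            ring
        have hf''val : flowValue (fun u v => w u v + α * z u v) (T \ T')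
            = flowValue f' (T \ T') + δ := by
          rw [flowValue_eq_sum _ (T \ T'), flowValue_eq_sum f' (T \ T')]
          simp_rw [hf''exc]
          rw [Finset.sum_add_distrib]
          have h1 : ∑ v ∈ (T \ T').toFinset, exc w v
              = ∑ v ∈ (T \ T').toFinset, exc f' v := by
            simp_rw [hwe]
            rw [Finset.sum_add_distrib, Finset.sum_sub_distrib, sumif, sumif,
              if_neg htd, if_neg (fun hh : s ∈ T \ T' => hsT hh.1)]
            ring
          have h2 : ∑ v ∈ (T \ T').toFinset, α * exc z v = δ := by
            rw [← Finset.mul_sum]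
            have h3 : ∑ v ∈ (T \ T').toFinset, exc z v = π := by
              rw [hπ, flowValue_eq_sum z (T \ T')]
            rw [h3, hαπ]
          rw [h1, h2]
        have := hf'max _ hf''flow
        rw [hf''val] at this
        linarith
    · -- t ∈ T \ T' : directly contradicts maximality of f'
      have htTT' : t ∈ T \ T' := ⟨ht, htT'⟩
      have hwflow : IsFlow (residualCap c f) S (T \ T') w := by
        refine ⟨⟨hwcap, hwa⟩, ?_⟩
        intro v hv
        rw [hwe v, hf'e v hv]
        have hvt : v ≠ t := fun e => hv (Or.inr (e ▸ htTT'))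
        have hvs : v ≠ s := fun e => hv (Or.inl (e ▸ hsS))
        simp [hvt, hvs]
      have hval : flowValue w (T \ T') = flowValue f' (T \ T') + δ := by
        rw [flowValue_eq_sum w (T \ T'), flowValue_eq_sum f' (T \ T')]
        simp_rw [hwe]
        rw [Finset.sum_add_distrib, Finset.sum_sub_distrib, sumif, sumif,
          if_pos htTT', if_neg (fun hh : s ∈ T \ T' => hsT hh.1)]
        ring
      have := hf'max w hwflow
      rw [hval] at this
      linarith
  exact flowValue_le_of_cut c F g S T hFflow hg R (Reach.base _ _) hTR
    (fun u hu v hv => by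
      have := Reach.not_step (r := rF) hu hv
      simp only [hrF] at this
      linarith)
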